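/- arXiv:2503.02568 — 6 statements merged into one kernel-verified Lean document; each statement's English description precedes it below -/
import Mathlib

section
/- Let ψ_1,…,ψ_N be unit vectors in ℂ^d with prior probabilities η_1,…,η_N, and let G be the Gram matrix of the ensemble. Then for any POVM Π_1,…,Π_N with N outcomes on ℂ^d there exists a family Ξ_1,…,Ξ_N of positive semidefinite N×N complex matrices such that G − Σ_{k=1}^N Ξ_k is positive semidefinite and η_k ⟨ψ_k, Π_l ψ_k⟩ = (Ξ_l)_{k,k} for all k, l ∈ {1,…,N}. -/
open Matrix BigOperators
open scoped ComplexOrder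

/-!
The Gram matrix factors as `G = Wᴴ W`, where `W` is the `d × N` matrix with columns
`√η_k ψ_k`. Taking `Ξ_l = Wᴴ Π_l W` works: congruence by `W` preserves positive
semidefiniteness, `G - ∑ Ξ_l = Wᴴ (1 - ∑ Π_l) W`, and the `k`-th diagonal entry of
`Wᴴ Π_l W` is `η_k ⟨ψ_k, Π_l ψ_k⟩`.
-/

namespace Matrix

variable {m n α : Type*} [Fintype m] [CommSemiring α] [StarRing α]

theorem conjTranspose_mul_mul_apply (W : Matrix m n α) (M : Matrix m m α) (k l : n) :
    (Wᴴ * M * W) k l = star (fun i => W i k) ⬝ᵥ (M *ᵥ fun i => W i l) := by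
  rw [dotProduct_mulVec, mul_apply']
  rfl

theorem conjTranspose_mul_mul_apply_of_smul_columns (c : n → α) (v : n → m → α)
    (M : Matrix m m α) (k l : n) :
    ((of fun i k => (c k • v k) i)ᴴ * M * of fun i k => (c k • v k) i) k l
      = star (c k) * c l * (star (v k) ⬝ᵥ (M *ᵥ v l)) := by
  rw [conjTranspose_mul_mul_apply]
  simp only [of_apply]
  rw [star_smul, mulVec_smul, smul_dotProduct, dotProduct_smul, smul_eq_mul, smul_eq_mul,
    mul_assoc]

end Matrix

theorem gram_complete_descriptor_forward_general
    (d N : ℕ) (ψ : Fin N → (Fin d → ℂ)) (η : Fin N → ℝ)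
    (hη : ∀ k, 0 ≤ η k)
    (G : Matrix (Fin N) (Fin N) ℂ)
    (hG : ∀ k l, G k l = (Real.sqrt (η k * η l) : ℂ) * (star (ψ k) ⬝ᵥ ψ l))
    (P : Fin N → Matrix (Fin d) (Fin d) ℂ)
    (hP : ∀ k, (P k).PosSemidef)
    (hPsum : (1 - ∑ k, P k).PosSemidef) :
    ∃ Ξ : Fin N → Matrix (Fin N) (Fin N) ℂ,
      (∀ k, (Ξ k).PosSemidef) ∧ (G - ∑ k, Ξ k).PosSemidef ∧
      ∀ k l, (η k : ℂ) * (star (ψ k) ⬝ᵥ (P l *ᵥ ψ k)) = Ξ l k k := by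
  set W : Matrix (Fin d) (Fin N) ℂ := of fun i k => ((Real.sqrt (η k) : ℂ) • ψ k) i
  have hW (M : Matrix (Fin d) (Fin d) ℂ) (k l : Fin N) :
      (Wᴴ * M * W) k l = (Real.sqrt (η k * η l) : ℂ) * (star (ψ k) ⬝ᵥ (M *ᵥ ψ l)) := by
    rw [conjTranspose_mul_mul_apply_of_smul_columns, Complex.star_def, Complex.conj_ofReal,
      Real.sqrt_mul (hη k), Complex.ofReal_mul]
  have hGW : G = Wᴴ * (1 : Matrix (Fin d) (Fin d) ℂ) * W := by
    ext k l
    rw [hG, hW, one_mulVec]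
  refine ⟨fun l => Wᴴ * P l * W, fun l => (hP l).conjTranspose_mul_mul_same W, ?_, ?_⟩
  · have hdiff : G - ∑ l, Wᴴ * P l * W = Wᴴ * (1 - ∑ l, P l) * W := by
      rw [hGW, Matrix.mul_sub, Matrix.sub_mul, Matrix.mul_sum, Matrix.sum_mul]
    rw [hdiff]
    exact hPsum.conjTranspose_mul_mul_same W
  · intro k l
    dsimp only
    rw [hW, Real.sqrt_mul_self (hη k)]

/-- Given an ensemble of unit vectors `ψ k ∈ ℂ^d` with prior
probabilities `η k` and Gram matrix `G`, for any `N`-outcome POVM `P` on `ℂ^d`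
there exist PSD `N × N` matrices `Ξ k` with `G - ∑ Ξ k` PSD and
`η k ⟨ψ k, P l ψ k⟩ = (Ξ l) k k`. -/
theorem gram_complete_descriptor_forward
    (d N : ℕ) (ψ : Fin N → (Fin d → ℂ)) (η : Fin N → ℝ)
    (hψ : ∀ k, star (ψ k) ⬝ᵥ ψ k = 1)
    (hη : ∀ k, 0 ≤ η k) (hηsum : ∑ k, η k = 1)
    (G : Matrix (Fin N) (Fin N) ℂ)
    (hG : ∀ k l, G k l = (Real.sqrt (η k * η l) : ℂ) * (star (ψ k) ⬝ᵥ ψ l))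
    (P : Fin N → Matrix (Fin d) (Fin d) ℂ)
    (hP : ∀ k, (P k).PosSemidef)
    (hPsum : (1 - ∑ k, P k).PosSemidef) :
    ∃ Ξ : Fin N → Matrix (Fin N) (Fin N) ℂ,
      (∀ k, (Ξ k).PosSemidef) ∧ (G - ∑ k, Ξ k).PosSemidef ∧
      ∀ k l, (η k : ℂ) * (star (ψ k) ⬝ᵥ (P l *ᵥ ψ k)) = Ξ l k k :=
  gram_complete_descriptor_forward_general d N ψ η hη G hG P hP hPsum
end

section
/- Let ψ_1,…,ψ_N be unit vectors in ℂ^d with prior probabilities η_1,…,η_N, and let φ_1,…,φ_N be unit vectors in ℂ^{d'} with prior probabilities η̃_1,…,η̃_N, and suppose the two ensembles have the same Gram matrix, i.e. √(η_k η_l) ⟨ψ_k, ψ_l⟩ = √(η̃_k η̃_l) ⟨φ_k, φ_l⟩ for all k,l. Then for every POVM Π_1,…,Π_N with N outcomes on ℂ^d there exists a POVM Π̃_1,…,Π̃_N with N outcomes on ℂ^{d'} such that η_k ⟨ψ_k, Π_l ψ_k⟩ = η̃_k ⟨φ_k, Π̃_l φ_k⟩ for all k, l ∈ {1,…,N}.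 -/
/-!
Put the ensembles into the columns of `A = [√η_k ψ_k]_k` and `B = [√η'_k φ_k]_k`. Equal Gram
matrices mean `Aᴴ A = Bᴴ B`, so `B x ↦ A x` is a well-defined isometry from the range of `B`
onto the range of `A`; precomposed with the orthogonal projection onto the range of `B` it becomes
a contraction `T` with `T B = A`. Then `Π̃_l = Tᴴ Π_l T` is a POVM, because
`1 - ∑ Π̃_l = (1 - Tᴴ T) + Tᴴ (1 - ∑ Π_l) T`, and `⟨B e_k, Π̃_l B e_k⟩ = ⟨A e_k, Π_l A e_k⟩`.
-/

open Matrix BigOperators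
open scoped ComplexOrder InnerProductSpace

namespace LinearMap

variable {𝕜 E F G : Type*} [RCLike 𝕜]
  [NormedAddCommGroup E] [InnerProductSpace 𝕜 E]
  [NormedAddCommGroup F] [InnerProductSpace 𝕜 F]
  [NormedAddCommGroup G] [InnerProductSpace 𝕜 G]

/-- Douglas' factorization lemma, in finite dimension. -/
theorem exists_comp_eq_of_norm_le [FiniteDimensional 𝕜 G] (f : E →ₗ[𝕜] F) (g : E →ₗ[𝕜] G)
    (hfg : ∀ x, ‖f x‖ ≤ ‖g x‖) :
    ∃ T : G →ₗ[𝕜] F, T ∘ₗ g = f ∧ ∀ y, ‖T y‖ ≤ ‖y‖ := by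
  have hker : ker g.rangeRestrict ≤ ker f := fun x hx => by
    rw [ker_rangeRestrict, mem_ker] at hx
    simpa [hx] using hfg x
  let h : range g →ₗ[𝕜] F := (ker g.rangeRestrict).liftQ f hker ∘ₗ
    (g.rangeRestrict.quotKerEquivOfSurjective g.surjective_rangeRestrict).symm.toLinearMap
  have h_apply : ∀ x, h (g.rangeRestrict x) = f x := fun x => by
    simp [h, quotKerEquivOfSurjective_symm_apply]
  refine ⟨h ∘ₗ (range g).orthogonalProjectionOnto.toLinearMap, ?_, fun y => ?_⟩
  · ext x
    have : (range g).orthogonalProjectionOnto (g x) = g.rangeRestrict x :=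
      Submodule.orthogonalProjectionOnto_mem_subspace_eq_self (g.rangeRestrict x)
    simp [this, h_apply]
  · obtain ⟨x, hx⟩ := g.surjective_rangeRestrict ((range g).orthogonalProjectionOnto y)
    calc ‖h ((range g).orthogonalProjectionOnto y)‖ = ‖f x‖ := by rw [← hx, h_apply]
      _ ≤ ‖g x‖ := hfg x
      _ = ‖(range g).orthogonalProjectionOnto y‖ := by rw [← hx]; rfl
      _ ≤ ‖y‖ := Submodule.norm_orthogonalProjectionOnto_apply_le _ y

end LinearMap

namespace Matrix

variable {𝕜 l m n : Type*} [RCLike 𝕜] [Fintype l] [Fintype m] [Fintype n]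

theorem star_dotProduct_conjTranspose_mul_mul_mulVec (T : Matrix m n 𝕜) (P : Matrix m m 𝕜)
    (v : n → 𝕜) :
    star v ⬝ᵥ ((Tᴴ * P * T) *ᵥ v) = star (T *ᵥ v) ⬝ᵥ (P *ᵥ (T *ᵥ v)) := by
  rw [star_mulVec, ← mulVec_mulVec, ← mulVec_mulVec, dotProduct_mulVec, dotProduct_mulVec,
    vecMul_vecMul]

variable [DecidableEq l] [DecidableEq m] [DecidableEq n]

theorem posSemidef_sub_conjTranspose_mul_self_iff (A : Matrix l n 𝕜) (B : Matrix m n 𝕜) :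
    (Bᴴ * B - Aᴴ * A).PosSemidef ↔ ∀ x, ‖toEuclideanLin A x‖ ≤ ‖toEuclideanLin B x‖ := by
  set f := toEuclideanLin A
  set g := toEuclideanLin B
  have hlin : toEuclideanLin (Bᴴ * B - Aᴴ * A) = g.adjoint ∘ₗ g - f.adjoint ∘ₗ f := by
    simp only [map_sub, toLpLin_mul_same, toEuclideanLin_conjTranspose_eq_adjoint, f, g]
  have hsymm : (g.adjoint ∘ₗ g - f.adjoint ∘ₗ f).IsSymmetric :=
    g.isSymmetric_adjoint_comp_self.sub f.isSymmetric_adjoint_comp_self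
  rw [← isPositive_toEuclideanLin_iff, hlin, LinearMap.IsPositive, and_iff_right hsymm]
  refine forall_congr' fun x => ?_
  rw [LinearMap.sub_apply, inner_sub_left, map_sub, LinearMap.comp_apply, LinearMap.comp_apply,
    LinearMap.adjoint_inner_left, LinearMap.adjoint_inner_left, inner_self_eq_norm_sq,
    inner_self_eq_norm_sq, sub_nonneg]
  exact sq_le_sq₀ (norm_nonneg _) (norm_nonneg _)

theorem exists_mul_eq_of_posSemidef_sub (A : Matrix l n 𝕜) (B : Matrix m n 𝕜)
    (h : (Bᴴ * B - Aᴴ * A).PosSemidef) :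
    ∃ T : Matrix l m 𝕜, T * B = A ∧ (1 - Tᴴ * T).PosSemidef := by
  obtain ⟨T, hTB, hT⟩ := LinearMap.exists_comp_eq_of_norm_le _ _
    ((posSemidef_sub_conjTranspose_mul_self_iff A B).mp h)
  refine ⟨toEuclideanLin.symm T, toEuclideanLin.injective ?_, ?_⟩
  · rwa [toLpLin_mul_same, LinearEquiv.apply_symm_apply]
  · have := (posSemidef_sub_conjTranspose_mul_self_iff (toEuclideanLin.symm T) 1).mpr
      fun y => by rw [LinearEquiv.apply_symm_apply, toLpLin_one]; exact hT y
    rwa [conjTranspose_one, one_mul] at this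

theorem posSemidef_one_sub_sum_conjTranspose_mul_mul {ι : Type*} [Fintype ι]
    {P : ι → Matrix m m 𝕜} {T : Matrix m n 𝕜}
    (hP : (1 - ∑ k, P k).PosSemidef) (hT : (1 - Tᴴ * T).PosSemidef) :
    (1 - ∑ k, Tᴴ * P k * T).PosSemidef := by
  have : 1 - ∑ k, Tᴴ * P k * T = (1 - Tᴴ * T) + Tᴴ * (1 - ∑ k, P k) * T := by
    simp only [Matrix.mul_sub, Matrix.sub_mul, Matrix.mul_sum, Matrix.sum_mul, Matrix.mul_one]
    abel
  rw [this]
  exact hT.add (hP.conjTranspose_mul_mul_same T)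

end Matrix

noncomputable def ensembleMatrix {𝕜 ι n : Type*} [RCLike 𝕜] (η : ι → ℝ) (ψ : ι → n → 𝕜) :
    Matrix n ι 𝕜 :=
  of fun i k => (√(η k) : 𝕜) * ψ k i

section ensembleMatrix

variable {𝕜 ι n : Type*} [RCLike 𝕜] {η : ι → ℝ} (ψ : ι → n → 𝕜)

theorem ensembleMatrix_col (k : ι) : (ensembleMatrix η ψ).col k = (√(η k) : 𝕜) • ψ k := by
  ext i; simp [ensembleMatrix]

variable [Fintype n]

theorem conjTranspose_ensembleMatrix_mul_self_apply {k : ι} (hk : 0 ≤ η k) (l : ι) :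
    ((ensembleMatrix η ψ)ᴴ * ensembleMatrix η ψ) k l =
      (√(η k * η l) : 𝕜) * (star (ψ k) ⬝ᵥ ψ l) := by
  simp only [ensembleMatrix, mul_apply, conjTranspose_apply, of_apply, star_mul', RCLike.star_def,
    RCLike.conj_ofReal, dotProduct, Pi.star_apply, Real.sqrt_mul hk, RCLike.ofReal_mul,
    Finset.mul_sum]
  exact Finset.sum_congr rfl fun i _ => by ring

theorem star_ensembleMatrix_col_dotProduct_mulVec {k : ι} (hk : 0 ≤ η k) (M : Matrix n n 𝕜) :
    star ((ensembleMatrix η ψ).col k) ⬝ᵥ (M *ᵥ (ensembleMatrix η ψ).col k) =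
      (η k : 𝕜) * (star (ψ k) ⬝ᵥ (M *ᵥ ψ k)) := by
  rw [ensembleMatrix_col, star_smul, mulVec_smul, smul_dotProduct, dotProduct_smul, smul_smul,
    RCLike.star_def, RCLike.conj_ofReal, ← RCLike.ofReal_mul, Real.mul_self_sqrt hk, smul_eq_mul]

end ensembleMatrix

theorem same_gram_same_statistics_general
    (d d' N : ℕ) (ψ : Fin N → (Fin d → ℂ)) (φ : Fin N → (Fin d' → ℂ))
    (η η' : Fin N → ℝ)
    (hη : ∀ k, 0 ≤ η k)
    (hη' : ∀ k, 0 ≤ η' k)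
    (hGram : ∀ k l,
      (Real.sqrt (η k * η l) : ℂ) * (star (ψ k) ⬝ᵥ ψ l) =
      (Real.sqrt (η' k * η' l) : ℂ) * (star (φ k) ⬝ᵥ φ l))
    (P : Fin N → Matrix (Fin d) (Fin d) ℂ)
    (hP : ∀ k, (P k).PosSemidef)
    (hPsum : (1 - ∑ k, P k).PosSemidef) :
    ∃ Q : Fin N → Matrix (Fin d') (Fin d') ℂ,
      (∀ k, (Q k).PosSemidef) ∧ (1 - ∑ k, Q k).PosSemidef ∧
      ∀ k l, (η k : ℂ) * (star (ψ k) ⬝ᵥ (P l *ᵥ ψ k)) =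
        (η' k : ℂ) * (star (φ k) ⬝ᵥ (Q l *ᵥ φ k)) := by
  set A := ensembleMatrix η ψ
  set B := ensembleMatrix η' φ
  have hAB : Aᴴ * A = Bᴴ * B := ext fun k l => by
    rw [conjTranspose_ensembleMatrix_mul_self_apply ψ (hη k),
      conjTranspose_ensembleMatrix_mul_self_apply φ (hη' k)]
    exact hGram k l
  obtain ⟨T, hTB, hT⟩ := exists_mul_eq_of_posSemidef_sub A B (by rw [hAB, sub_self]; exact .zero)
  refine ⟨fun l => Tᴴ * P l * T, fun l => (hP l).conjTranspose_mul_mul_same T,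
    posSemidef_one_sub_sum_conjTranspose_mul_mul hPsum hT, fun k l => ?_⟩
  have hcol : T *ᵥ B.col k = A.col k := by
    rw [← mulVec_single_one, ← mulVec_single_one, mulVec_mulVec, hTB]
  calc (η k : ℂ) * (star (ψ k) ⬝ᵥ (P l *ᵥ ψ k))
      = star (A.col k) ⬝ᵥ (P l *ᵥ A.col k) :=
        (star_ensembleMatrix_col_dotProduct_mulVec ψ (hη k) (P l)).symm
    _ = star (B.col k) ⬝ᵥ ((Tᴴ * P l * T) *ᵥ B.col k) := by
        rw [star_dotProduct_conjTranspose_mul_mul_mulVec, hcol]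
    _ = (η' k : ℂ) * (star (φ k) ⬝ᵥ ((Tᴴ * P l * T) *ᵥ φ k)) :=
        star_ensembleMatrix_col_dotProduct_mulVec φ (hη' k) _

/-- Two pure-state ensembles with the same Gram matrix have
identical measurement statistics: for any POVM on the first, there is a POVM on
the second giving the same joint probabilities. -/
theorem same_gram_same_statistics
    (d d' N : ℕ) (ψ : Fin N → (Fin d → ℂ)) (φ : Fin N → (Fin d' → ℂ))
    (η η' : Fin N → ℝ)
    (hψ : ∀ k, star (ψ k) ⬝ᵥ ψ k = 1)
    (hφ : ∀ k, star (φ k) ⬝ᵥ φ k = 1)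
    (hη : ∀ k, 0 ≤ η k) (hηsum : ∑ k, η k = 1)
    (hη' : ∀ k, 0 ≤ η' k) (hη'sum : ∑ k, η' k = 1)
    (hGram : ∀ k l,
      (Real.sqrt (η k * η l) : ℂ) * (star (ψ k) ⬝ᵥ ψ l) =
      (Real.sqrt (η' k * η' l) : ℂ) * (star (φ k) ⬝ᵥ φ l))
    (P : Fin N → Matrix (Fin d) (Fin d) ℂ)
    (hP : ∀ k, (P k).PosSemidef)
    (hPsum : (1 - ∑ k, P k).PosSemidef) :
    ∃ Q : Fin N → Matrix (Fin d') (Fin d') ℂ,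
      (∀ k, (Q k).PosSemidef) ∧ (1 - ∑ k, Q k).PosSemidef ∧
      ∀ k l, (η k : ℂ) * (star (ψ k) ⬝ᵥ (P l *ᵥ ψ k)) =
        (η' k : ℂ) * (star (φ k) ⬝ᵥ (Q l *ᵥ φ k)) :=
  same_gram_same_statistics_general d d' N ψ φ η η' hη hη' hGram P hP hPsum
end

section
/- Let 𝒢 be a finite group, let G be a positive semidefinite 𝒢×𝒢 complex matrix lying in the ℂ-linear span of the right-regular representation matrices {R_g : g ∈ 𝒢}, let S be the positive semidefinite square root of G, and for each h ∈ 𝒢 let φ_h ∈ ℂ^𝒢 be the h-th column of S, i.e. φ_h = Σ_{l∈𝒢} S_{l,h} e_l in the standard basis {e_l}. Then ⟨φ_g, φ_h⟩ = G_{g,h} for all g, h ∈ 𝒢, and L_g φ_h = φ_{gh} for all g, h ∈ 𝒢; in particular, every positive semidefinite matrix in the span of {R_g} is the Gram matrix of an ensemble generated by a unitary representation of 𝒢 acting on a single seed vector. -/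
open Matrix BigOperators
open scoped ComplexOrder

/-!
The left- and right-regular representations commute, so every `L g` commutes with `G`, which lies
in the span of the `R k`. A matrix commuting with `G = S * S` commutes with its positive square
root `S = CFC.sqrt G` (a continuous function of `G`), and `L g * S = S * L g` read off in column
`h` is `L g *ᵥ φ h = φ (g * h)`. The Gram identity is `Sᴴ * S = S * S = G`.
-/

theorem CFC.commute_of_commute_mul_self {A : Type*} [NonUnitalRing A] [StarRing A]
    [TopologicalSpace A] [Module ℝ A] [IsScalarTower ℝ A A] [SMulCommClass ℝ A A]
    [NonUnitalContinuousFunctionalCalculus ℝ A IsSelfAdjoint] [IsTopologicalRing A] [T2Space A]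
    [PartialOrder A] [StarOrderedRing A] [NonnegSpectrumClass ℝ A]
    {a b : A} (ha : 0 ≤ a) (h : Commute (a * a) b) : Commute a b := by
  rw [← CFC.sqrt_mul_self a ha]
  exact h.cfcₙ_nnreal _

theorem Matrix.PosSemidef.commute_of_commute_mul_self {n : Type*} [Fintype n] [DecidableEq n]
    {S B : Matrix n n ℂ} (hS : S.PosSemidef) (h : Commute (S * S) B) : Commute S B := by
  open scoped MatrixOrder in
  exact CFC.commute_of_commute_mul_self hS.nonneg h

namespace Matrix

variable (𝒢 : Type*) [Group 𝒢] [Fintype 𝒢] [DecidableEq 𝒢] (α : Type*) [Semiring α]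

def leftRegular (g : 𝒢) : Matrix 𝒢 𝒢 α := of fun r c => if g = r * c⁻¹ then 1 else 0

def rightRegular (g : 𝒢) : Matrix 𝒢 𝒢 α := of fun r c => if g = r⁻¹ * c then 1 else 0

variable {𝒢 α}

theorem leftRegular_mul_apply (g : 𝒢) (M : Matrix 𝒢 𝒢 α) (r c : 𝒢) :
    (leftRegular 𝒢 α g * M) r c = M (g⁻¹ * r) c := by
  simp [leftRegular, mul_apply, eq_mul_inv_iff_mul_eq, ← eq_inv_mul_iff_mul_eq]

theorem mul_leftRegular_apply (g : 𝒢) (M : Matrix 𝒢 𝒢 α) (r c : 𝒢) :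
    (M * leftRegular 𝒢 α g) r c = M r (g * c) := by
  simp [leftRegular, mul_apply, eq_mul_inv_iff_mul_eq]

theorem leftRegular_mulVec (g : 𝒢) (v : 𝒢 → α) :
    leftRegular 𝒢 α g *ᵥ v = fun r => v (g⁻¹ * r) := by
  ext r
  simp [leftRegular, mulVec, dotProduct, eq_mul_inv_iff_mul_eq, ← eq_inv_mul_iff_mul_eq]

theorem commute_leftRegular_rightRegular (g k : 𝒢) :
    Commute (leftRegular 𝒢 α g) (rightRegular 𝒢 α k) := by
  ext r c
  simp [leftRegular_mul_apply, mul_leftRegular_apply, rightRegular, mul_assoc]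

end Matrix

theorem columns_of_sqrt_gram_are_group_generated_ensemble_general
    (𝒢 : Type*) [Group 𝒢] [Fintype 𝒢] [DecidableEq 𝒢]
    (L R : 𝒢 → Matrix 𝒢 𝒢 ℂ)
    (hL : ∀ g r c, L g r c = if g = r * c⁻¹ then 1 else 0)
    (hR : ∀ g r c, R g r c = if g = r⁻¹ * c then 1 else 0)
    (G : Matrix 𝒢 𝒢 ℂ)
    (hGspan : G ∈ Submodule.span ℂ (Set.range R))
    (S : Matrix 𝒢 𝒢 ℂ) (hS : S.PosSemidef) (hSsq : S * S = G)
    (φ : 𝒢 → (𝒢 → ℂ)) (hφ : ∀ h l, φ h l = S l h) :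
    (∀ g h, star (φ g) ⬝ᵥ φ h = G g h) ∧
    (∀ g h, L g *ᵥ φ h = φ (g * h)) := by
  obtain rfl : L = leftRegular 𝒢 ℂ := funext fun g => ext (hL g)
  obtain rfl : R = rightRegular 𝒢 ℂ := funext fun g => ext (hR g)
  have hLG (g : 𝒢) : Commute (leftRegular 𝒢 ℂ g) G :=
    Commute.span_right (by rintro _ ⟨k, rfl⟩; exact commute_leftRegular_rightRegular g k) G hGspan
  have hLS (g : 𝒢) : Commute (leftRegular 𝒢 ℂ g) S :=
    (hS.commute_of_commute_mul_self (hSsq ▸ (hLG g).symm)).symm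
  obtain rfl : φ = Sᵀ := funext₂ hφ
  refine ⟨fun g h => ?_, fun g h => ?_⟩
  · calc star (Sᵀ g) ⬝ᵥ Sᵀ h = (Sᴴ * S) g h := by simp [mul_apply, dotProduct]
      _ = G g h := by rw [hS.isHermitian.eq, hSsq]
  · ext r
    simpa [leftRegular_mulVec, leftRegular_mul_apply, mul_leftRegular_apply] using
      congrFun₂ (hLS g).eq r h

/-- Let `G` be a positive semidefinite `𝒢 × 𝒢` matrix in the
span of the right-regular representation matrices, `S` its positive
semidefinite square root, and `φ h` the `h`-th column of `S`. Then
`⟨φ g, φ h⟩ = G g h` and `L g *ᵥ φ h = φ (g * h)`; in particular every PSD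
matrix in the span of the `R g` is the Gram matrix of a group-generated
ensemble (transforming under the left-regular representation). -/
theorem columns_of_sqrt_gram_are_group_generated_ensemble
    (𝒢 : Type*) [Group 𝒢] [Fintype 𝒢] [DecidableEq 𝒢]
    (L R : 𝒢 → Matrix 𝒢 𝒢 ℂ)
    (hL : ∀ g r c, L g r c = if g = r * c⁻¹ then 1 else 0)
    (hR : ∀ g r c, R g r c = if g = r⁻¹ * c then 1 else 0)
    (G : Matrix 𝒢 𝒢 ℂ) (hG : G.PosSemidef)
    (hGspan : G ∈ Submodule.span ℂ (Set.range R))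
    (S : Matrix 𝒢 𝒢 ℂ) (hS : S.PosSemidef) (hSsq : S * S = G)
    (φ : 𝒢 → (𝒢 → ℂ)) (hφ : ∀ h l, φ h l = S l h) :
    (∀ g h, star (φ g) ⬝ᵥ φ h = G g h) ∧
    (∀ g h, L g *ᵥ φ h = φ (g * h)) :=
  columns_of_sqrt_gram_are_group_generated_ensemble_general 𝒢 L R hL hR G hGspan S hS hSsq φ hφ
end

section
/- Let U be a unitary projective representation of a finite group 𝒢 with unimodular multiplier ω on ℂ^d, where ω satisfies ω(g, g⁻¹) = 1 for all g ∈ 𝒢. Let ψ ∈ ℂ^d and set ψ_g := U_g ψ. Then the 𝒢×𝒢 Gram matrix G with entries G_{g,h} = ⟨ψ_g, ψ_h⟩ satisfies G = Σ_{l∈𝒢} ⟨ψ, ψ_l⟩ conj(R_l), where R_l are the projective right-regular representation matrices with multiplier ω; in particular G lies in the ℂ-linear span of {conj(R_l) : l ∈ 𝒢}. -/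
open Matrix

/-! The Gram entry `⟨U_g ψ, U_h ψ⟩ = ⟨ψ, U_g⋆ U_h ψ⟩` depends on `g⁻¹h` only up to a phase:
unitarity and `U_g U_{g⁻¹h} = ω(g, g⁻¹h) U_h` give `U_g⋆ U_h = conj ω(g, g⁻¹h) U_{g⁻¹h}`, and the
cocycle identity at `(g, g⁻¹h, h⁻¹)` together with `ω(k, k⁻¹) = 1` turns this phase into
`conj ω(g⁻¹h, h⁻¹)`, the only nonzero entry of `conj R_{g⁻¹h}` in position `(g, h)`. -/

theorem Matrix.star_mulVec_dotProduct_mulVec {m n α : Type*} [Fintype m] [Fintype n]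
    [CommSemiring α] [StarRing α] (A B : Matrix m n α) (x y : n → α) :
    star (A *ᵥ x) ⬝ᵥ (B *ᵥ y) = star x ⬝ᵥ ((Aᴴ * B) *ᵥ y) := by
  rw [star_mulVec, dotProduct_mulVec, vecMul_vecMul, ← dotProduct_mulVec]

theorem cocycle_apply_inv_mul_eq {G M : Type*} [Group G] [MulOneClass M] {ω : G → G → M}
    (hassoc : ∀ g h f, ω g h * ω (g * h) f = ω g (h * f) * ω h f)
    (hinv : ∀ g, ω g g⁻¹ = 1) (g h : G) : ω g (g⁻¹ * h) = ω (g⁻¹ * h) h⁻¹ := by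
  simpa [hinv] using hassoc g (g⁻¹ * h) h⁻¹

theorem mul_eq_smul_of_mul_eq_smul {R A : Type*} [CommSemiring R] [Semiring A] [Algebra R A]
    {a b : R} {x u v w : A} (hba : b * a = 1) (hxu : x * u = 1) (h : u * v = a • w) :
    x * w = b • v := by
  calc x * w = (b * a) • (x * w) := by rw [hba, one_smul]
    _ = b • (x * u * v) := by rw [mul_assoc, h, mul_smul_comm, smul_smul]
    _ = b • v := by rw [hxu, one_mul]

theorem star_mul_eq_conj_smul_of_projective {G A : Type*} [Group G] [Semiring A] [StarMul A]
    [Algebra ℂ A] {ω : G → G → ℂ} (huni : ∀ g h, ‖ω g h‖ = 1) {U : G → A}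
    (hU : ∀ g, U g ∈ unitary A)
    (hmul : ∀ g h, U g * U h = ω g h • U (g * h)) (g h : G) :
    star (U g) * U h = starRingEnd ℂ (ω g (g⁻¹ * h)) • U (g⁻¹ * h) := by
  refine mul_eq_smul_of_mul_eq_smul (a := ω g (g⁻¹ * h)) ?_
    (Unitary.star_mul_self_of_mem (hU g)) ?_
  · rw [Complex.conj_mul', huni, Complex.ofReal_one, one_pow]
  · rw [hmul, mul_inv_cancel_left]

section RightRegular

variable {G K : Type*} [Group G] [DecidableEq G]

def projRightRegular [Zero K] (ω : G → G → K) (g : G) : Matrix G G K :=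
  of fun r c => if r = c * g⁻¹ then ω g c⁻¹ else 0

theorem projRightRegular_map_star [CommSemiring K] [StarRing K] (ω : G → G → K) (g : G) :
    (projRightRegular ω g).map (starRingEnd K) = projRightRegular (fun a b => star (ω a b)) g := by
  ext r c
  simp only [projRightRegular, map_apply, of_apply, apply_ite (starRingEnd K), map_zero]
  rfl

theorem sum_smul_projRightRegular_apply [Fintype G] [Semiring K] (ω : G → G → K) (a : G → K)
    (g h : G) :
    (∑ l, a l • projRightRegular ω l) g h = a (g⁻¹ * h) * ω (g⁻¹ * h) h⁻¹ := by
  have hcond : ∀ l, (g = h * l⁻¹) ↔ (l = g⁻¹ * h) := fun l => by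
    rw [eq_mul_inv_iff_mul_eq, eq_inv_mul_iff_mul_eq]
  simp only [Matrix.sum_apply, Matrix.smul_apply, projRightRegular, of_apply, hcond, smul_eq_mul,
    mul_ite, mul_zero, Finset.sum_ite_eq', Finset.mem_univ, if_true]

end RightRegular

theorem projective_gram_in_span_of_conj_right_regular_general
    (𝒢 : Type*) [Group 𝒢] [Fintype 𝒢] [DecidableEq 𝒢] (d : ℕ)
    (ω : 𝒢 → 𝒢 → ℂ)
    (hωassoc : ∀ g h f, ω g h * ω (g * h) f = ω g (h * f) * ω h f)
    (hωuni : ∀ g h, ‖ω g h‖ = 1)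
    (hωinv : ∀ g : 𝒢, ω g g⁻¹ = 1)
    (U : 𝒢 → Matrix (Fin d) (Fin d) ℂ)
    (hU : ∀ g, U g ∈ unitary (Matrix (Fin d) (Fin d) ℂ))
    (hUmul : ∀ g h, U g * U h = ω g h • U (g * h))
    (ψ : Fin d → ℂ)
    (R : 𝒢 → Matrix 𝒢 𝒢 ℂ)
    (hR : ∀ g r c, R g r c = if r = c * g⁻¹ then ω g c⁻¹ else 0)
    (Gram : Matrix 𝒢 𝒢 ℂ)
    (hGram : ∀ g h, Gram g h = star (U g *ᵥ ψ) ⬝ᵥ (U h *ᵥ ψ)) :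
    Gram = ∑ l : 𝒢, (star ψ ⬝ᵥ (U l *ᵥ ψ)) • (R l).map (starRingEnd ℂ) ∧
    Gram ∈ Submodule.span ℂ (Set.range fun l => (R l).map (starRingEnd ℂ)) := by
  have hR' : R = projRightRegular ω := funext fun l => ext (hR l)
  have hGram_eq : Gram = ∑ l : 𝒢, (star ψ ⬝ᵥ (U l *ᵥ ψ)) • (R l).map (starRingEnd ℂ) := by
    ext g h
    rw [hGram, star_mulVec_dotProduct_mulVec, ← star_eq_conjTranspose,
      star_mul_eq_conj_smul_of_projective hωuni hU hUmul, smul_mulVec, dotProduct_smul, smul_eq_mul,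
      cocycle_apply_inv_mul_eq hωassoc hωinv, hR']
    simp only [projRightRegular_map_star, sum_smul_projRightRegular_apply]
    exact mul_comm _ _
  exact ⟨hGram_eq, (Submodule.mem_span_range_iff_exists_fun ℂ).2 ⟨_, hGram_eq.symm⟩⟩

/-- For an ensemble `ψ_g = U_g ψ` generated by a unitary
projective representation `U` of a finite group `𝒢` with unimodular multiplier
`ω` satisfying `ω(g, g⁻¹) = 1`, the Gram matrix `Gram g h = ⟨ψ_g, ψ_h⟩` equals
`∑ l, ⟨ψ, ψ_l⟩ • conj (R l)`, where `R l` are the projective right-regular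
representation matrices; in particular it lies in the span of the
`conj (R l)`. -/
theorem projective_gram_in_span_of_conj_right_regular
    (𝒢 : Type*) [Group 𝒢] [Fintype 𝒢] [DecidableEq 𝒢] (d : ℕ)
    (ω : 𝒢 → 𝒢 → ℂ)
    (hω0 : ∀ g h, ω g h ≠ 0)
    (hωassoc : ∀ g h f, ω g h * ω (g * h) f = ω g (h * f) * ω h f)
    (hωe : ∀ g, ω g 1 = 1 ∧ ω 1 g = 1)
    (hωuni : ∀ g h, ‖ω g h‖ = 1)
    (hωinv : ∀ g : 𝒢, ω g g⁻¹ = 1)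
    (U : 𝒢 → Matrix (Fin d) (Fin d) ℂ)
    (hU : ∀ g, U g ∈ unitary (Matrix (Fin d) (Fin d) ℂ))
    (hUe : U 1 = 1)
    (hUmul : ∀ g h, U g * U h = ω g h • U (g * h))
    (ψ : Fin d → ℂ)
    (R : 𝒢 → Matrix 𝒢 𝒢 ℂ)
    (hR : ∀ g r c, R g r c = if r = c * g⁻¹ then ω g c⁻¹ else 0)
    (Gram : Matrix 𝒢 𝒢 ℂ)
    (hGram : ∀ g h, Gram g h = star (U g *ᵥ ψ) ⬝ᵥ (U h *ᵥ ψ)) :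
    Gram = ∑ l : 𝒢, (star ψ ⬝ᵥ (U l *ᵥ ψ)) • (R l).map (starRingEnd ℂ) ∧
    Gram ∈ Submodule.span ℂ (Set.range fun l => (R l).map (starRingEnd ℂ)) :=
  projective_gram_in_span_of_conj_right_regular_general 𝒢 d ω hωassoc hωuni hωinv U hU hUmul ψ R hR
    Gram hGram
end

section
/- Let V be a finite-dimensional complex inner product space, I a finite index set, and {ξ₀} ∪ {ξ_i}_{i∈I} an orthonormal family in V. Let β₀ > 0 and β_i > 0 for i ∈ I, let d_i ≥ 1 be natural numbers, set Δ := Σ_{i∈I} d_i β_i and ζ := β₀ − Δ, and assume ζ ≥ 0. Let ψ := β₀ ξ₀ + Σ_{i∈I} √(d_i) β_i ξ_i, and let Z be a positive semidefinite operator on V. Then the operator |ψ⟩⟨ψ| − (β₀² − Δ²) |ξ₀⟩⟨ξ₀| + ζ Σ_{i∈I} β_i ( d_i |ξ₀⟩⟨ξ₀| + |ξ_i⟩⟨ξ_i| ) + ζ Z is positive semidefinite. -/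
open scoped ComplexOrder BigOperators

/-- The rank-one operator `|x⟩⟨x| : v ↦ ⟨x, v⟩ • x` on a complex inner product
space (inner product conjugate-linear in the first argument). -/
noncomputable def rankOne {V : Type*} [NormedAddCommGroup V] [InnerProductSpace ℂ V]
    (x : V) : V →ₗ[ℂ] V where
  toFun v := (inner ℂ x v : ℂ) • x
  map_add' u v := by simp [inner_add_right, add_smul]
  map_smul' c v := by simp [inner_smul_right, smul_smul]

/-- An operator `T` is positive semidefinite if it is self-adjoint (symmetric)
and `⟨v, T v⟩ ≥ 0` for all `v`. -/
def IsPosSemidefOp {V : Type*} [NormedAddCommGroup V] [InnerProductSpace ℂ V]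
    (T : V →ₗ[ℂ] V) : Prop :=
  (∀ x y : V, (inner ℂ (T x) y : ℂ) = inner ℂ x (T y)) ∧ ∀ v : V, 0 ≤ (inner ℂ v (T v) : ℂ)

/-!
Put `a = ⟪ξ₀, v⟫`, `bᵢ = ⟪ξᵢ, v⟫` and `s = ∑ √dᵢ βᵢ bᵢ`, so that `⟪ψ, v⟫ = β₀ a + s`. Since
`β₀² - Δ² - ζΔ = β₀ζ`, the quadratic form of the operator without the `ζZ` term is
`‖β₀ a + s‖² - β₀ζ‖a‖² + ζ ∑ βᵢ‖bᵢ‖²`. Weighted Cauchy–Schwarz gives `‖s‖² ≤ Δ ∑ βᵢ‖bᵢ‖²`, and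
with `β₀ = ζ + Δ` this makes `Δ` times the form at least `β₀‖Δa + s‖² ≥ 0`; when `Δ = 0` also
`s = 0` and the form is `ζ ∑ βᵢ‖bᵢ‖²`.
-/

theorem norm_sum_sqrt_mul_smul_sq_le {ι E : Type*} [SeminormedAddCommGroup E] [NormedSpace ℝ E]
    (s : Finset ι) {d β : ι → ℝ} (hd : ∀ i ∈ s, 0 ≤ d i) (hβ : ∀ i ∈ s, 0 ≤ β i) (b : ι → E) :
    ‖∑ i ∈ s, (√(d i) * β i) • b i‖ ^ 2 ≤ (∑ i ∈ s, d i * β i) * ∑ i ∈ s, β i * ‖b i‖ ^ 2 := by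
  have hnorm : ‖∑ i ∈ s, (√(d i) * β i) • b i‖ ≤ ∑ i ∈ s, √(d i) * β i * ‖b i‖ := by
    refine (norm_sum_le _ _).trans_eq (Finset.sum_congr rfl fun i hi => ?_)
    rw [norm_smul, Real.norm_of_nonneg (mul_nonneg (Real.sqrt_nonneg _) (hβ i hi))]
  refine (pow_le_pow_left₀ (norm_nonneg _) hnorm 2).trans ?_
  refine Finset.sum_sq_le_sum_mul_sum_of_sq_le_mul s (fun i hi => mul_nonneg (hd i hi) (hβ i hi))
    (fun i hi => mul_nonneg (hβ i hi) (sq_nonneg _)) fun i hi => le_of_eq ?_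
  rw [mul_pow, mul_pow, Real.sq_sqrt (hd i hi)]
  ring

theorem mul_mul_norm_sq_le_norm_smul_add_sq_add {E : Type*} [NormedAddCommGroup E]
    [InnerProductSpace ℝ E] (a s : E) {ζ Δ B : ℝ} (hζ : 0 ≤ ζ) (hΔ : 0 ≤ Δ) (hB : 0 ≤ B)
    (hs : ‖s‖ ^ 2 ≤ Δ * B) :
    (ζ + Δ) * ζ * ‖a‖ ^ 2 ≤ ‖(ζ + Δ) • a + s‖ ^ 2 + ζ * B := by
  rcases hΔ.eq_or_lt with rfl | hΔ
  · obtain rfl : s = 0 := by simpa using hs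
    rw [add_zero, add_zero, norm_smul, Real.norm_of_nonneg hζ]
    linear_combination mul_nonneg hζ hB
  · have key : Δ * (‖(ζ + Δ) • a + s‖ ^ 2 + ζ * B - (ζ + Δ) * ζ * ‖a‖ ^ 2)
        = (ζ + Δ) * ‖Δ • a + s‖ ^ 2 + ζ * (Δ * B - ‖s‖ ^ 2) := by
      simp only [norm_add_sq_real, norm_smul, real_inner_smul_left, Real.norm_eq_abs,
        abs_of_pos hΔ, abs_of_nonneg (add_nonneg hζ hΔ.le)]
      ring
    have hscaled : 0 ≤ Δ * (‖(ζ + Δ) • a + s‖ ^ 2 + ζ * B - (ζ + Δ) * ζ * ‖a‖ ^ 2) := by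
      rw [key]
      have := hΔ.le
      positivity
    linarith [(mul_nonneg_iff_of_pos_left hΔ).1 hscaled]

section RankOne

variable {V : Type*} [NormedAddCommGroup V] [InnerProductSpace ℂ V]

open LinearMap

theorem rankOne_apply (x v : V) : rankOne x v = inner ℂ x v • x := rfl

theorem isSymmetric_rankOne (x : V) : (rankOne x).IsSymmetric := fun u w => by
  simp only [rankOne_apply, inner_smul_left, inner_smul_right, inner_conj_symm]
  ring

theorem inner_rankOne_apply_self (x v : V) :
    inner ℂ (rankOne x v) v = ((‖inner ℂ x v‖ ^ 2 : ℝ) : ℂ) := by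
  rw [rankOne_apply, inner_smul_left, Complex.conj_mul', Complex.ofReal_pow]

theorem isPosSemidefOp_iff_isPositive (T : V →ₗ[ℂ] V) : IsPosSemidefOp T ↔ T.IsPositive := by
  rw [isPositive_iff]
  refine and_congr_right fun hT => forall_congr' fun v => ?_
  rw [hT]

theorem isPositive_rankOne_sub_add_sum {ι : Type*} [Fintype ι] (ξ₀ : V) (ξ : ι → V)
    (β₀ ζ Δ : ℝ) (β : ι → ℝ) (d : ι → ℕ) (hβ : ∀ i, 0 ≤ β i)
    (hΔ : Δ = ∑ i, (d i : ℝ) * β i) (hζdef : ζ = β₀ - Δ) (hζ : 0 ≤ ζ) :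
    (rankOne ((β₀ : ℂ) • ξ₀ + ∑ i, ((√(d i) * β i : ℝ) : ℂ) • ξ i)
      - ((β₀ ^ 2 - Δ ^ 2 : ℝ) : ℂ) • rankOne ξ₀
      + (ζ : ℂ) • ∑ i, ((β i : ℝ) : ℂ) • ((d i : ℂ) • rankOne ξ₀ + rankOne (ξ i))).IsPositive := by
  have hreal (r : ℝ) : starRingEnd ℂ r = r := Complex.conj_ofReal r
  have hnat (n : ℕ) : starRingEnd ℂ n = n := map_natCast _ n
  rw [isPositive_iff]
  refine ⟨?_, fun v => ?_⟩
  · refine ((isSymmetric_rankOne _).sub ((isSymmetric_rankOne _).smul (hreal _))).add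
      (IsSymmetric.smul (hreal _) (isSymmetric_sum _ fun i _ => IsSymmetric.smul (hreal _) ?_))
    exact ((isSymmetric_rankOne _).smul (hnat _)).add (isSymmetric_rankOne _)
  set a := inner ℂ ξ₀ v
  set b := fun i => inner ℂ (ξ i) v
  set s := ∑ i, (√(d i) * β i) • b i
  set B := ∑ i, β i * ‖b i‖ ^ 2
  have hψ : inner ℂ ((β₀ : ℂ) • ξ₀ + ∑ i, ((√(d i) * β i : ℝ) : ℂ) • ξ i) v = β₀ • a + s := by
    simp only [inner_add_left, sum_inner, inner_smul_left, hreal, Complex.real_smul, s, a, b]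
  have hform : inner ℂ ((rankOne ((β₀ : ℂ) • ξ₀ + ∑ i, ((√(d i) * β i : ℝ) : ℂ) • ξ i)
      - ((β₀ ^ 2 - Δ ^ 2 : ℝ) : ℂ) • rankOne ξ₀
      + (ζ : ℂ) • ∑ i, ((β i : ℝ) : ℂ) • ((d i : ℂ) • rankOne ξ₀ + rankOne (ξ i))) v) v
      = ((‖β₀ • a + s‖ ^ 2 - (β₀ ^ 2 - Δ ^ 2) * ‖a‖ ^ 2
          + ζ * ∑ i, β i * (d i * ‖a‖ ^ 2 + ‖b i‖ ^ 2) : ℝ) : ℂ) := by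
    simp only [LinearMap.add_apply, LinearMap.sub_apply, LinearMap.smul_apply,
      LinearMap.sum_apply, inner_add_left, inner_sub_left, inner_smul_left, sum_inner,
      inner_rankOne_apply_self, hψ, hreal, hnat]
    push_cast
    rfl
  have hsum : ∑ i, β i * (d i * ‖a‖ ^ 2 + ‖b i‖ ^ 2) = Δ * ‖a‖ ^ 2 + B := by
    rw [hΔ, Finset.sum_mul, ← Finset.sum_add_distrib]
    exact Finset.sum_congr rfl fun i _ => by ring
  rw [hform, Complex.zero_le_real, hsum]
  obtain rfl : β₀ = ζ + Δ := by linarith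
  have hΔ0 : 0 ≤ Δ := hΔ ▸ Finset.sum_nonneg fun i _ => mul_nonneg (Nat.cast_nonneg _) (hβ i)
  have hB : 0 ≤ B := Finset.sum_nonneg fun i _ => mul_nonneg (hβ i) (sq_nonneg _)
  have hs : ‖s‖ ^ 2 ≤ Δ * B := hΔ ▸ norm_sum_sqrt_mul_smul_sq_le _
    (fun i _ => Nat.cast_nonneg (d i)) (fun i _ => hβ i) b
  linear_combination mul_mul_norm_sq_le_norm_smul_add_sq_add a s hζ hΔ0 hB hs

end RankOne

theorem min_error_exclusion_dual_operator_posSemidef_general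
    {V : Type*} [NormedAddCommGroup V] [InnerProductSpace ℂ V]
    {I : Type*} [Fintype I]
    (ξ : Option I → V)
    (β₀ : ℝ) (β : I → ℝ) (hβ : ∀ i, 0 < β i)
    (d : I → ℕ)
    (Δ : ℝ) (hΔ : Δ = ∑ i, (d i : ℝ) * β i)
    (ζ : ℝ) (hζdef : ζ = β₀ - Δ) (hζ : 0 ≤ ζ)
    (ψ : V)
    (hψ : ψ = (β₀ : ℂ) • ξ none + ∑ i, ((Real.sqrt (d i) * β i : ℝ) : ℂ) • ξ (some i))
    (Z : V →ₗ[ℂ] V) (hZ : IsPosSemidefOp Z) :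
    IsPosSemidefOp
      (rankOne ψ - ((β₀ ^ 2 - Δ ^ 2 : ℝ) : ℂ) • rankOne (ξ none)
        + (ζ : ℂ) • ∑ i, ((β i : ℝ) : ℂ) •
            ((d i : ℂ) • rankOne (ξ none) + rankOne (ξ (some i)))
        + (ζ : ℂ) • Z) := by
  rw [isPosSemidefOp_iff_isPositive] at hZ ⊢
  subst hψ
  exact (isPositive_rankOne_sub_add_sum (ξ none) (fun i => ξ (some i)) β₀ ζ Δ β d
    (fun i => (hβ i).le) hΔ hζdef hζ).add (hZ.smul_of_nonneg (Complex.zero_le_real.2 hζ))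

/-- With `{ξ₀} ∪ {ξ i}` orthonormal, `β₀, β i > 0`,
`d i ≥ 1`, `Δ = ∑ d i * β i`, `ζ = β₀ - Δ ≥ 0`,
`ψ = β₀ ξ₀ + ∑ √(d i) β i ξ i` and `Z` positive semidefinite, the operator
`|ψ⟩⟨ψ| - (β₀² - Δ²)|ξ₀⟩⟨ξ₀| + ζ ∑ β i (d i |ξ₀⟩⟨ξ₀| + |ξ i⟩⟨ξ i|) + ζ Z`
is positive semidefinite. -/
theorem min_error_exclusion_dual_operator_posSemidef
    {V : Type*} [NormedAddCommGroup V] [InnerProductSpace ℂ V]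
    [FiniteDimensional ℂ V]
    {I : Type*} [Fintype I]
    (ξ : Option I → V) (hξ : Orthonormal ℂ ξ)
    (β₀ : ℝ) (β : I → ℝ) (hβ₀ : 0 < β₀) (hβ : ∀ i, 0 < β i)
    (d : I → ℕ) (hd : ∀ i, 1 ≤ d i)
    (Δ : ℝ) (hΔ : Δ = ∑ i, (d i : ℝ) * β i)
    (ζ : ℝ) (hζdef : ζ = β₀ - Δ) (hζ : 0 ≤ ζ)
    (ψ : V)
    (hψ : ψ = (β₀ : ℂ) • ξ none + ∑ i, ((Real.sqrt (d i) * β i : ℝ) : ℂ) • ξ (some i))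
    (Z : V →ₗ[ℂ] V) (hZ : IsPosSemidefOp Z) :
    IsPosSemidefOp
      (rankOne ψ - ((β₀ ^ 2 - Δ ^ 2 : ℝ) : ℂ) • rankOne (ξ none)
        + (ζ : ℂ) • ∑ i, ((β i : ℝ) : ℂ) •
            ((d i : ℂ) • rankOne (ξ none) + rankOne (ξ (some i)))
        + (ζ : ℂ) • Z) :=
  min_error_exclusion_dual_operator_posSemidef_general ξ β₀ β hβ d Δ hΔ ζ hζdef hζ ψ hψ Z hZ
end

section
/- Let N ≥ 2, let β : {1,…,N} → ℝ with β_p > 0 for all p, let d : {1,…,N} → ℕ with d_p ≥ 1 for all p and d_1 = 1, let ε > 0, and set Δ := Σ_{p=2}^N d_p β_p. Then there exists ν̃ > 0 such that the real symmetric N×N matrix K with entries K_{p,q} = (ν̃/ε) √(d_p d_q) β_p β_q + D_{p,q}, where D is the diagonal matrix with D_{1,1} = −β_1², D_{p,p} = β_p Δ for 1 < p < N, and D_{N,N} = β_N Δ + ε/d_N, is positive definite. -/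
open Matrix BigOperators

/-!
Write `K = k • v vᵀ + diag(-v₁², w₂, …, w_N)` with `k = ν̃/ε`, `v_p = √d_p β_p` (so `v₁ = β₁`) and
`w_p` the remaining diagonal entries. For `x ≠ 0` put `S = v ⬝ x`, `T = Σ_{p ≥ 2} v_p x_p` and
`D = Σ_{p ≥ 2} w_p x_p²`; the quadratic form is `k S² - (S - T)² + D`, and Cauchy–Schwarz gives
`T² ≤ ρ D` with `ρ = Σ_{p ≥ 2} v_p² / w_p`. As `w_p ≥ β_p Δ`, strictly at `p = N` because of the
extra `ε / d_N`, we get `ρ < 1`. Then for `k > 1 + 1/(1 - ρ)` the form is at least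
`(k - 1 - 1/(1 - ρ)) S² + (1 - ρ)² D`, which vanishes only at `x = 0`.
-/

open Finset

variable {ι : Type*}

lemma sum_mul_sq_div_lt_one (s : Finset ι) {c β w : ι → ℝ} (hc : ∀ i ∈ s, 0 < c i)
    (hβ : ∀ i ∈ s, 0 < β i) (hw : ∀ i ∈ s, β i * ∑ j ∈ s, c j * β j ≤ w i)
    (hlt : ∃ i ∈ s, β i * ∑ j ∈ s, c j * β j < w i) :
    ∑ i ∈ s, c i * β i ^ 2 / w i < 1 := by
  set Δ := ∑ j ∈ s, c j * β j
  have hcβ : ∀ i ∈ s, 0 < c i * β i := fun i hi => mul_pos (hc i hi) (hβ i hi)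
  have hΔ : 0 < Δ := by
    obtain ⟨i, hi, -⟩ := hlt
    exact sum_pos hcβ ⟨i, hi⟩
  have hw₀ : ∀ i ∈ s, 0 < w i := fun i hi => (mul_pos (hβ i hi) hΔ).trans_le (hw i hi)
  calc ∑ i ∈ s, c i * β i ^ 2 / w i < ∑ i ∈ s, c i * β i / Δ := by
        refine sum_lt_sum (fun i hi => ?_) ?_
        · rw [div_le_div_iff₀ (hw₀ i hi) hΔ]
          linear_combination mul_le_mul_of_nonneg_left (hw i hi) (hcβ i hi).le
        · obtain ⟨i, hi, hlt⟩ := hlt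
          refine ⟨i, hi, ?_⟩
          rw [div_lt_div_iff₀ (hw₀ i hi) hΔ]
          linear_combination mul_lt_mul_of_pos_left hlt (hcβ i hi)
    _ = 1 := by rw [← sum_div, div_self hΔ.ne']

lemma sub_sq_le_of_sq_le_mul {ρ S T D : ℝ} (hρ : ρ < 1) (hT : T ^ 2 ≤ ρ * D) :
    (S - T) ^ 2 ≤ (1 + (1 - ρ)⁻¹) * S ^ 2 + (1 - (1 - ρ) ^ 2) * D := by
  set t := (1 - ρ)⁻¹
  have ht : 0 < t := inv_pos.2 (by linarith)
  have htρ : t * (1 - ρ) = 1 := inv_mul_cancel₀ (by linarith)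
  have hamgm : t * (S - T) ^ 2 ≤ t * ((1 + t) * S ^ 2 + (2 - ρ) * T ^ 2) := by
    nlinarith [sq_nonneg (t * S + T)]
  nlinarith [le_of_mul_le_mul_left hamgm ht]

section

variable [DecidableEq ι]

lemma of_sqrt_mul_add_ite_eq_smul_vecMulVec_add_diagonal (i₀ : ι) {c : ι → ℝ}
    (hc : ∀ i, 0 ≤ c i) (hc₀ : c i₀ = 1) (k : ℝ) (β D : ι → ℝ) :
    (of fun p q => k * √(c p * c q) * β p * β q +
        if p = q then (if p = i₀ then -β i₀ ^ 2 else D p) else 0) =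
      k • vecMulVec (fun i => √(c i) * β i) (fun i => √(c i) * β i) +
        diagonal (Function.update D i₀ (-(√(c i₀) * β i₀) ^ 2)) := by
  ext p q
  simp only [of_apply, Matrix.add_apply, Matrix.smul_apply, smul_eq_mul, vecMulVec_apply,
    diagonal_apply, Real.sqrt_mul (hc p)]
  rcases eq_or_ne p q with rfl | hpq
  · rw [if_pos rfl, if_pos rfl]
    rcases eq_or_ne p i₀ with rfl | hp
    · rw [if_pos rfl, Function.update_self, hc₀, Real.sqrt_one]
      ring
    · rw [if_neg hp, Function.update_of_ne hp]
      ring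
  · rw [if_neg hpq, if_neg hpq]
    ring

lemma dotProduct_smul_vecMulVec_add_diagonal_mulVec [Fintype ι] (k : ℝ) (v D x : ι → ℝ) :
    x ⬝ᵥ ((k • vecMulVec v v + diagonal D) *ᵥ x) = k * (v ⬝ᵥ x) ^ 2 + ∑ i, D i * x i ^ 2 := by
  rw [add_mulVec, smul_mulVec, vecMulVec_mulVec, dotProduct_add, dotProduct_smul, op_smul_eq_smul,
    dotProduct_smul, dotProduct_comm x v]
  simp only [dotProduct, mulVec_diagonal, smul_eq_mul]
  congr 1
  · ring
  · exact sum_congr rfl fun i _ => by ring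

lemma eq_zero_of_dotProduct_eq_zero_of_sum_erase_mul_sq_eq_zero [Fintype ι] {i₀ : ι}
    {v w x : ι → ℝ} (hv : v i₀ ≠ 0) (hw : ∀ i ∈ univ.erase i₀, 0 < w i) (hS : v ⬝ᵥ x = 0)
    (hD : ∑ i ∈ univ.erase i₀, w i * x i ^ 2 = 0) : x = 0 := by
  have hx : ∀ i ∈ univ.erase i₀, x i = 0 := fun i hi => by
    have := (sum_eq_zero_iff_of_nonneg fun j hj => mul_nonneg (hw j hj).le (sq_nonneg _)).1 hD i hi
    simpa [(hw i hi).ne'] using this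
  have hxi₀ : x i₀ = 0 := by
    rw [dotProduct, ← add_sum_erase _ _ (mem_univ i₀),
      sum_eq_zero fun i hi => by rw [hx i hi, mul_zero]] at hS
    simpa [hv] using hS
  funext i
  rcases eq_or_ne i i₀ with rfl | hi
  · exact hxi₀
  · exact hx i (mem_erase.2 ⟨hi, mem_univ i⟩)

theorem posDef_smul_vecMulVec_add_diagonal_update [Fintype ι] (i₀ : ι) {v w : ι → ℝ}
    (hv : v i₀ ≠ 0) (hw : ∀ i ≠ i₀, 0 < w i)
    (hρ : ∑ i ∈ univ.erase i₀, v i ^ 2 / w i < 1) {k : ℝ}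
    (hk : 1 + (1 - ∑ i ∈ univ.erase i₀, v i ^ 2 / w i)⁻¹ < k) :
    (k • vecMulVec v v + diagonal (Function.update w i₀ (-v i₀ ^ 2))).PosDef := by
  set ρ := ∑ i ∈ univ.erase i₀, v i ^ 2 / w i
  have hw' : ∀ i ∈ univ.erase i₀, 0 < w i := fun i hi => hw i (ne_of_mem_erase hi)
  refine posDef_iff_dotProduct_mulVec.2 ⟨?_, fun x hx => ?_⟩
  · exact ((posSemidef_vecMulVec_self_star v).isHermitian.smul (IsSelfAdjoint.all k)).add
      (isHermitian_diagonal _)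
  rw [star_trivial, dotProduct_smul_vecMulVec_add_diagonal_mulVec]
  set S := v ⬝ᵥ x
  set T := ∑ i ∈ univ.erase i₀, v i * x i
  set D := ∑ i ∈ univ.erase i₀, w i * x i ^ 2
  have hS : S = v i₀ * x i₀ + T := (add_sum_erase _ _ (mem_univ i₀)).symm
  have hdiag : ∑ i, Function.update w i₀ (-v i₀ ^ 2) i * x i ^ 2 = -(v i₀ * x i₀) ^ 2 + D := by
    rw [← add_sum_erase _ _ (mem_univ i₀), Function.update_self]
    congr 1
    · ring
    · exact sum_congr rfl fun i hi => by rw [Function.update_of_ne (ne_of_mem_erase hi)]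
  have hD : 0 ≤ D := sum_nonneg fun i hi => mul_nonneg (hw' i hi).le (sq_nonneg _)
  have hCS : T ^ 2 ≤ ρ * D :=
    sum_sq_le_sum_mul_sum_of_sq_le_mul _ (fun i hi => div_nonneg (sq_nonneg _) (hw' i hi).le)
      (fun i hi => mul_nonneg (hw' i hi).le (sq_nonneg _))
      (fun i hi => le_of_eq <| by field_simp [(hw' i hi).ne'])
  have hSD : S ≠ 0 ∨ D ≠ 0 := by
    by_contra! h
    exact hx (eq_zero_of_dotProduct_eq_zero_of_sum_erase_mul_sq_eq_zero hv hw' h.1 h.2)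
  have hk' : 0 < k - (1 + (1 - ρ)⁻¹) := by linarith
  have h1ρ : 0 < (1 - ρ) ^ 2 := by nlinarith
  have hlower : (k - (1 + (1 - ρ)⁻¹)) * S ^ 2 + (1 - ρ) ^ 2 * D ≤
      k * S ^ 2 + (-(S - T) ^ 2 + D) := by
    linarith [sub_sq_le_of_sq_le_mul (S := S) hρ hCS]
  rw [hdiag, show v i₀ * x i₀ = S - T by linarith]
  rcases hSD with hS0 | hD0
  · nlinarith [mul_pos hk' (sq_pos_of_ne_zero hS0), mul_nonneg h1ρ.le hD]
  · nlinarith [mul_nonneg hk'.le (sq_nonneg S), mul_pos h1ρ (lt_of_le_of_ne hD (Ne.symm hD0))]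

end

/-- Index `0` plays the role of `1` and `Fin.last (n + 1)` that of `N`. -/
theorem unambiguous_exclusion_dual_matrix_posDef
    (n : ℕ) (β : Fin (n + 2) → ℝ) (hβ : ∀ p, 0 < β p)
    (d : Fin (n + 2) → ℕ) (hd : ∀ p, 1 ≤ d p) (hd1 : d 0 = 1)
    (ε : ℝ) (hε : 0 < ε)
    (Δ : ℝ) (hΔ : Δ = ∑ p ∈ Finset.univ.erase 0, (d p : ℝ) * β p) :
    ∃ ν > (0 : ℝ),
      (Matrix.of fun p q : Fin (n + 2) =>
        ν / ε * Real.sqrt ((d p : ℝ) * (d q : ℝ)) * β p * β q +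
          (if p = q then
            (if p = 0 then -(β 0) ^ 2
             else β p * Δ + (if p = Fin.last (n + 1) then ε / (d p : ℝ) else 0))
           else 0)).PosDef := by
  have hd₀ : ∀ p, (0 : ℝ) < d p := fun p => by exact_mod_cast hd p
  have hlast : Fin.last (n + 1) ∈ univ.erase 0 := mem_erase.2 ⟨Fin.last_pos.ne', mem_univ _⟩
  have hΔ₀ : 0 < Δ := hΔ ▸ sum_pos (fun p _ => mul_pos (hd₀ p) (hβ p)) ⟨_, hlast⟩
  set v : Fin (n + 2) → ℝ := fun p => √(d p) * β p
  set w : Fin (n + 2) → ℝ := fun p => β p * Δ + if p = Fin.last (n + 1) then ε / d p else 0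
  have hΔw : ∀ p, β p * Δ ≤ w p := fun p => by
    simp only [w]; split_ifs <;> simp [(div_pos hε (hd₀ p)).le]
  have hρ : ∑ p ∈ univ.erase 0, v p ^ 2 / w p < 1 := by
    simp only [v, mul_pow, Real.sq_sqrt (hd₀ _).le]
    refine sum_mul_sq_div_lt_one _ (fun p _ => hd₀ p) (fun p _ => hβ p) (fun p _ => hΔ ▸ hΔw p)
      ⟨_, hlast, ?_⟩
    simp [w, ← hΔ, div_pos hε (hd₀ _)]
  set ρ := ∑ p ∈ univ.erase 0, v p ^ 2 / w p
  have hk : 0 < 2 + (1 - ρ)⁻¹ := by have := inv_pos.2 (sub_pos.2 hρ); linarith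
  refine ⟨ε * (2 + (1 - ρ)⁻¹), mul_pos hε hk, ?_⟩
  rw [mul_div_cancel_left₀ _ hε.ne',
    of_sqrt_mul_add_ite_eq_smul_vecMulVec_add_diagonal 0 (fun p => (hd₀ p).le) (by simp [hd1])]
  exact posDef_smul_vecMulVec_add_diagonal_update 0 (by simp [v, hd1, (hβ 0).ne'])
    (fun p _ => (mul_pos (hβ p) hΔ₀).trans_le (hΔw p)) hρ (by linarith)
end
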